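/- arXiv:2405.12046 — 8 statements merged into one kernel-verified Lean document; each statement's English description precedes it below -/
import Mathlib

section
/- Let m > 0, C3 ≥ 0 and C4 ≥ 0 be real numbers. Define M(t) = m/(t+1) and κ(t) = C4·(1 + 2·M(t)) for natural numbers t ≥ 1, and for natural numbers t1, t2 ≥ 1 define the window average κ̄_{t1,t2} = (1/(|t2−t1|+1))·∑_{t=min(t1,t2)}^{max(t1,t2)} κ(t). Let t0 and t be natural numbers with ⌊m⌋ < t0 ≤ t, and let a : ℕ → ℝ be a nonnegative sequence satisfying a(i+1) ≤ κ(i)·a(i) + C3 + C4·(M(i)² + 2·M(i)) for every i with t0 ≤ i ≤ t. Then a(t+1) ≤ κ̄_{t0,t}^{t−t0+1}·a(t0) + 3·m·C4·∑_{i=t0}^{t} κ̄_{t0+1,t}^{t−i}/(i+1) + C3·∑_{i=1}^{t−t0+1} κ̄_{t0+1,t}^{i−1}. -/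
open Finset

/-- The optimizer drift bound `M(t) = m/(t+1)`. -/
noncomputable def Mdrift (m : ℝ) (t : ℕ) : ℝ := m / ((t : ℝ) + 1)

/-- The per-step contraction factor `κ(t) = C4·(1 + 2·M(t))`. -/
noncomputable def kap (m C4 : ℝ) (t : ℕ) : ℝ := C4 * (1 + 2 * Mdrift m t)

/-- The window average `κ̄_{t1,t2} = (1/(|t2−t1|+1))·∑_{t=min(t1,t2)}^{max(t1,t2)} κ(t)`. -/
noncomputable def kbar (m C4 : ℝ) (t1 t2 : ℕ) : ℝ :=
  (1 / (((max t1 t2 - min t1 t2 : ℕ) : ℝ) + 1)) *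
    ∑ t ∈ Finset.Icc (min t1 t2) (max t1 t2), kap m C4 t

/-! Since `M i ≤ 1` once `i > ⌊m⌋`, the inhomogeneous term is at most
`C3 + 3 m C4 / (i + 1)`. Unrolling the recursion from `t0` then bounds `a (t + 1)` by
`(∏_{t0 ≤ j ≤ t} κ j) · a t0 + ∑_i (∏_{i < j ≤ t} κ j) · (C3 + 3 m C4 / (i + 1))`.
By AM–GM each product of `κ`'s is at most the matching power of its mean, and since `κ` is
nonincreasing, the mean over a tail window `[i + 1, t]` is at most the mean over `[t0 + 1, t]`. -/

theorem Real.prod_le_mean_pow_card {ι : Type*} (s : Finset ι) (f : ι → ℝ)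
    (hf : ∀ i ∈ s, 0 ≤ f i) :
    ∏ i ∈ s, f i ≤ ((∑ i ∈ s, f i) / #s) ^ #s := by
  rcases s.eq_empty_or_nonempty with rfl | hs
  · simp
  have amgm := Real.geom_mean_le_arith_mean s (fun _ => 1) f (by simp) (by simpa) hf
  simp only [Real.rpow_one, sum_const, nsmul_eq_mul, mul_one, one_mul] at amgm
  calc ∏ i ∈ s, f i = ((∏ i ∈ s, f i) ^ ((#s : ℝ)⁻¹)) ^ #s :=
        (Real.rpow_inv_natCast_pow (prod_nonneg hf) hs.card_pos.ne').symm
    _ ≤ ((∑ i ∈ s, f i) / #s) ^ #s :=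
        pow_le_pow_left₀ (Real.rpow_nonneg (prod_nonneg hf) _) amgm _

theorem Antitone.sum_div_card_Icc_le {f : ℕ → ℝ} (hf : Antitone f) {k l n : ℕ}
    (hkl : k ≤ l) (hln : l ≤ n) :
    (∑ j ∈ Icc l n, f j) / #(Icc l n) ≤ (∑ j ∈ Icc k n, f j) / #(Icc k n) := by
  have hdisj : Disjoint (Ico k l) (Icc l n) :=
    disjoint_left.2 fun j hj hj' => by simp only [mem_Ico, mem_Icc] at hj hj'; omega
  have hsplit : Icc k n = Ico k l ∪ Icc l n := by
    ext j; simp only [mem_union, mem_Ico, mem_Icc]; omega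
  have head : #(Ico k l) • f l ≤ ∑ j ∈ Ico k l, f j :=
    card_nsmul_le_sum _ _ _ fun j hj => hf (mem_Ico.1 hj).2.le
  have tail : ∑ j ∈ Icc l n, f j ≤ #(Icc l n) • f l :=
    sum_le_card_nsmul _ _ _ fun j hj => hf (mem_Icc.1 hj).1
  rw [nsmul_eq_mul] at head tail
  have hq : (0 : ℝ) < #(Icc l n) := Nat.cast_pos.2 (card_pos.2 (nonempty_Icc.2 hln))
  have hp : (0 : ℝ) ≤ #(Ico k l) := Nat.cast_nonneg _
  rw [hsplit, sum_union hdisj, card_union_of_disjoint hdisj, Nat.cast_add,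
    div_le_div_iff₀ hq (by positivity)]
  nlinarith [mul_le_mul_of_nonneg_left head hq.le, mul_le_mul_of_nonneg_left tail hp]

theorem le_prod_mul_add_sum_of_le_mul_add {R : Type*} [CommSemiring R] [PartialOrder R]
    [IsOrderedRing R] {a f b : ℕ → R} (hf : ∀ i, 0 ≤ f i) {t0 t : ℕ} (ht : t0 ≤ t)
    (hrec : ∀ i, t0 ≤ i → i ≤ t → a (i + 1) ≤ f i * a i + b i) :
    a (t + 1) ≤ (∏ j ∈ Icc t0 t, f j) * a t0
      + ∑ i ∈ Icc t0 t, (∏ j ∈ Icc (i + 1) t, f j) * b i := by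
  induction t, ht using Nat.le_induction with
  | base => simpa using hrec t0 le_rfl le_rfl
  | succ n hn ih =>
    have ih := ih fun i hi hin => hrec i hi (by omega)
    have hshift : ∀ i ∈ Icc t0 n, (∏ j ∈ Icc (i + 1) (n + 1), f j) * b i
        = f (n + 1) * ((∏ j ∈ Icc (i + 1) n, f j) * b i) := fun i hi => by
      rw [prod_Icc_succ_top (show i + 1 ≤ n + 1 by simp only [mem_Icc] at hi; omega)]; ring
    calc a (n + 1 + 1) ≤ f (n + 1) * a (n + 1) + b (n + 1) := hrec (n + 1) (by omega) le_rfl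
      _ ≤ f (n + 1) * ((∏ j ∈ Icc t0 n, f j) * a t0
            + ∑ i ∈ Icc t0 n, (∏ j ∈ Icc (i + 1) n, f j) * b i) + b (n + 1) := by
          gcongr; exact hf _
      _ = _ := by
          rw [prod_Icc_succ_top (by omega), sum_Icc_succ_top (by omega), sum_congr rfl hshift,
            ← mul_sum, Icc_eq_empty_of_lt (Nat.lt_succ_self (n + 1)), prod_empty]
          ring

theorem sum_Icc_comp_sub {M : Type*} [AddCommMonoid M] (g : ℕ → M) {k n : ℕ} (h : k ≤ n) :
    ∑ i ∈ Icc k n, g (n - i) = ∑ i ∈ Icc 1 (n - k + 1), g (i - 1) :=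
  sum_nbij' (fun i => n + 1 - i) (fun i => n + 1 - i)
    (fun i hi => by simp only [mem_Icc] at hi ⊢; omega)
    (fun i hi => by simp only [mem_Icc] at hi ⊢; omega)
    (fun i hi => by simp only [mem_Icc] at hi; omega)
    (fun i hi => by simp only [mem_Icc] at hi; omega)
    (fun i hi => by simp only [mem_Icc] at hi; congr 1; omega)

section Drift

variable {m C4 : ℝ}

theorem Mdrift_nonneg (hm : 0 ≤ m) (t : ℕ) : 0 ≤ Mdrift m t := by
  unfold Mdrift; positivity

theorem Mdrift_le_one {t : ℕ} (hmt : m ≤ t + 1) : Mdrift m t ≤ 1 :=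
  div_le_one_of_le₀ hmt (by positivity)

theorem kap_nonneg (hm : 0 ≤ m) (hC4 : 0 ≤ C4) (t : ℕ) : 0 ≤ kap m C4 t := by
  unfold kap; have := Mdrift_nonneg hm t; positivity

theorem kap_antitone (hm : 0 ≤ m) (hC4 : 0 ≤ C4) : Antitone (kap m C4) := fun j k hjk => by
  unfold kap Mdrift; gcongr

theorem kbar_of_le {t1 t2 : ℕ} (h : t1 ≤ t2) :
    kbar m C4 t1 t2 = (∑ j ∈ Icc t1 t2, kap m C4 j) / #(Icc t1 t2) := by
  rw [kbar, min_eq_left h, max_eq_right h, Nat.card_Icc, Nat.sub_add_comm h]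
  push_cast; ring

theorem prod_Icc_kap_le_kbar_pow (hm : 0 ≤ m) (hC4 : 0 ≤ C4) {l k n : ℕ} (hlk : l ≤ k)
    (hk : k ≤ n + 1) :
    ∏ j ∈ Icc k n, kap m C4 j ≤ kbar m C4 l n ^ (n + 1 - k) := by
  rcases hk.lt_or_eq with hk | rfl
  · have hkn : k ≤ n := Nat.lt_succ_iff.1 hk
    rw [kbar_of_le (hlk.trans hkn), ← Nat.card_Icc]
    refine (Real.prod_le_mean_pow_card _ _ fun j _ => kap_nonneg hm hC4 j).trans ?_
    refine pow_le_pow_left₀ ?_ ((kap_antitone hm hC4).sum_div_card_Icc_le hlk hkn) _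
    exact div_nonneg (sum_nonneg fun j _ => kap_nonneg hm hC4 j) (Nat.cast_nonneg _)
  · simp

theorem mul_Mdrift_sq_add_two_mul_le (hm : 0 ≤ m) (hC4 : 0 ≤ C4) {t : ℕ} (hmt : m ≤ t + 1) :
    C4 * (Mdrift m t ^ 2 + 2 * Mdrift m t) ≤ 3 * m * C4 / ((t : ℝ) + 1) := by
  have h0 := Mdrift_nonneg hm t
  have h1 := Mdrift_le_one hmt
  calc C4 * (Mdrift m t ^ 2 + 2 * Mdrift m t) ≤ C4 * (3 * Mdrift m t) := by gcongr; nlinarith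
    _ = 3 * m * C4 / ((t : ℝ) + 1) := by unfold Mdrift; ring

end Drift

theorem telescoped_convergence_bound
    (m C3 C4 : ℝ) (hm : 0 < m) (hC3 : 0 ≤ C3) (hC4 : 0 ≤ C4)
    (t0 t : ℕ) (ht0 : (Nat.floor m : ℕ) < t0) (ht : t0 ≤ t)
    (a : ℕ → ℝ) (ha : ∀ i, 0 ≤ a i)
    (hrec : ∀ i, t0 ≤ i → i ≤ t →
      a (i + 1) ≤ kap m C4 i * a i + C3 + C4 * ((Mdrift m i) ^ 2 + 2 * Mdrift m i)) :
    a (t + 1) ≤ (kbar m C4 t0 t) ^ (t - t0 + 1) * a t0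
      + 3 * m * C4 * ∑ i ∈ Finset.Icc t0 t, (kbar m C4 (t0 + 1) t) ^ (t - i) / ((i : ℝ) + 1)
      + C3 * ∑ i ∈ Finset.Icc 1 (t - t0 + 1), (kbar m C4 (t0 + 1) t) ^ (i - 1) := by
  set K := kbar m C4 (t0 + 1) t
  have hmt0 : m < t0 := (Nat.floor_lt hm.le).1 ht0
  have hrec' : ∀ i, t0 ≤ i → i ≤ t →
      a (i + 1) ≤ kap m C4 i * a i + (C3 + 3 * m * C4 / ((i : ℝ) + 1)) := fun i hi hit => by
    have hmi : m ≤ i + 1 := hmt0.le.trans (by exact_mod_cast (by omega : t0 ≤ i + 1))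
    linarith [hrec i hi hit, mul_Mdrift_sq_add_two_mul_le hm.le hC4 hmi]
  have hhead : ∏ j ∈ Icc t0 t, kap m C4 j ≤ kbar m C4 t0 t ^ (t - t0 + 1) := by
    simpa [Nat.sub_add_comm ht] using
      prod_Icc_kap_le_kbar_pow hm.le hC4 le_rfl (by omega : t0 ≤ t + 1)
  have htail : ∀ i ∈ Icc t0 t, ∏ j ∈ Icc (i + 1) t, kap m C4 j ≤ K ^ (t - i) := fun i hi => by
    simp only [mem_Icc] at hi
    simpa using prod_Icc_kap_le_kbar_pow hm.le hC4 (by omega : t0 + 1 ≤ i + 1)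
      (by omega : i + 1 ≤ t + 1)
  calc a (t + 1) ≤ (∏ j ∈ Icc t0 t, kap m C4 j) * a t0
        + ∑ i ∈ Icc t0 t,
            (∏ j ∈ Icc (i + 1) t, kap m C4 j) * (C3 + 3 * m * C4 / ((i : ℝ) + 1)) :=
        le_prod_mul_add_sum_of_le_mul_add (kap_nonneg hm.le hC4) ht hrec'
    _ ≤ kbar m C4 t0 t ^ (t - t0 + 1) * a t0
        + ∑ i ∈ Icc t0 t, K ^ (t - i) * (C3 + 3 * m * C4 / ((i : ℝ) + 1)) := by
        gcongr with i hi
        · exact ha t0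
        · exact htail i hi
    _ = _ := by
        rw [← sum_Icc_comp_sub (K ^ ·) ht, mul_sum, mul_sum, add_assoc, ← sum_add_distrib]
        exact congrArg _ (sum_congr rfl fun i _ => by ring)
end

section
/- Let m > 0, C3 ≥ 0 and 0 ≤ C4 < 1 be real numbers, and define M(t) = m/(t+1) and κ(t) = C4·(1 + 2·M(t)) for natural numbers t ≥ 1. If a : ℕ → ℝ is a nonnegative sequence satisfying a(t+1) ≤ κ(t)·a(t) + C3 + C4·(M(t)² + 2·M(t)) for all t ≥ 1, then limsup_{t→∞} a(t) ≤ C3/(1 − C4). -/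
open Filter

open Topology

/-! Since `M(t) → 0`, for every `s > 0` the recursion is eventually dominated by the linear
recursion `a(t+1) ≤ (C4 + s)·a(t) + (C3 + s)` with contraction `C4 + s < 1`, whose solutions
approach its fixed point `(C3 + s)/(1 - C4 - s)` geometrically. Letting `s → 0⁺` gives the bound. -/

theorem le_add_pow_mul_of_le_mul_add {a : ℕ → ℝ} {q F : ℝ} {T : ℕ} (hq : 0 ≤ q)
    (hrec : ∀ n ≥ T, a (n + 1) ≤ q * a n + (1 - q) * F) :
    ∀ n ≥ T, a n ≤ F + q ^ (n - T) * (a T - F) := by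
  refine Nat.le_induction (by simp) fun n hn ih => ?_
  calc a (n + 1) ≤ q * a n + (1 - q) * F := hrec n hn
    _ ≤ q * (F + q ^ (n - T) * (a T - F)) + (1 - q) * F := by gcongr
    _ = F + q ^ (n + 1 - T) * (a T - F) := by rw [Nat.sub_add_comm hn, pow_succ]; ring

theorem limsup_le_div_of_le_mul_add {a : ℕ → ℝ} {q b : ℝ} (hq0 : 0 ≤ q) (hq1 : q < 1)
    (ha : IsCoboundedUnder (· ≤ ·) atTop a)
    (hrec : ∀ᶠ n in atTop, a (n + 1) ≤ q * a n + b) :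
    limsup a atTop ≤ b / (1 - q) := by
  set F := b / (1 - q)
  have hb : b = (1 - q) * F := (mul_div_cancel₀ b (sub_pos.2 hq1).ne').symm
  obtain ⟨T, hT⟩ := eventually_atTop.1 hrec
  have hgeom : Tendsto (fun n => F + q ^ (n - T) * (a T - F)) atTop (𝓝 F) := by
    have := ((tendsto_pow_atTop_nhds_zero_of_lt_one hq0 hq1).comp (tendsto_sub_atTop_nat T))
    simpa using tendsto_const_nhds.add (this.mul_const (a T - F))
  calc limsup a atTop ≤ limsup (fun n => F + q ^ (n - T) * (a T - F)) atTop :=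
        limsup_le_limsup (eventually_atTop.2 ⟨T, le_add_pow_mul_of_le_mul_add hq0 (hb ▸ hT)⟩)
          ha hgeom.isBoundedUnder_le
    _ = F := hgeom.limsup_eq

theorem limsup_le_div_of_le_mul_add_of_tendsto {a κ b : ℕ → ℝ} {k c : ℝ} (hk0 : 0 ≤ k)
    (hk1 : k < 1) (ha : ∀ᶠ n in atTop, 0 ≤ a n) (hκ : Tendsto κ atTop (𝓝 k))
    (hb : Tendsto b atTop (𝓝 c)) (hrec : ∀ᶠ n in atTop, a (n + 1) ≤ κ n * a n + b n) :
    limsup a atTop ≤ c / (1 - k) := by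
  have hbound : ∀ s, 0 < s → s < 1 - k → limsup a atTop ≤ (c + s) / (1 - (k + s)) := by
    intro s hs hs1
    refine limsup_le_div_of_le_mul_add (by linarith) (by linarith)
      (isCoboundedUnder_le_of_eventually_le atTop ha) ?_
    filter_upwards [ha, hrec, hκ.eventually_le_const (lt_add_of_pos_right k hs),
      hb.eventually_le_const (lt_add_of_pos_right c hs)] with n han hn hκn hbn
    nlinarith
  have hlim : Tendsto (fun s => (c + s) / (1 - (k + s))) (𝓝[>] 0) (𝓝 (c / (1 - k))) := by
    have hcont : ContinuousAt (fun s : ℝ => (c + s) / (1 - (k + s))) 0 :=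
      (continuousAt_const.add continuousAt_id).div
        (continuousAt_const.sub (continuousAt_const.add continuousAt_id)) (by simp; linarith)
    simpa using hcont.tendsto.mono_left nhdsWithin_le_nhds
  refine ge_of_tendsto hlim ?_
  filter_upwards [Ioo_mem_nhdsGT (sub_pos.2 hk1)] with s ⟨hs, hs1⟩
  exact hbound s hs hs1

theorem tendsto_Mdrift (m : ℝ) : Tendsto (Mdrift m) atTop (𝓝 0) :=
  tendsto_const_nhds.div_atTop (tendsto_atTop_add_const_right _ 1 tendsto_natCast_atTop_atTop)

theorem tendsto_kap (m C4 : ℝ) : Tendsto (kap m C4) atTop (𝓝 C4) := by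
  change Tendsto (fun t => C4 * (1 + 2 * Mdrift m t)) atTop (𝓝 C4)
  simpa using (tendsto_const_nhds (x := C4)).mul
    ((tendsto_const_nhds (x := (1 : ℝ))).add ((tendsto_const_nhds (x := (2 : ℝ))).mul
      (tendsto_Mdrift m)))

theorem limsup_convergence_bound_general
    (m C3 C4 : ℝ) (hC4 : 0 ≤ C4) (hC4' : C4 < 1)
    (a : ℕ → ℝ) (ha : ∀ t, 0 ≤ a t)
    (hrec : ∀ t, 1 ≤ t →
      a (t + 1) ≤ kap m C4 t * a t + C3 + C4 * ((Mdrift m t) ^ 2 + 2 * Mdrift m t)) :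
    Filter.limsup a Filter.atTop ≤ C3 / (1 - C4) := by
  have hM := tendsto_Mdrift m
  have hb : Tendsto (fun t => C3 + C4 * ((Mdrift m t) ^ 2 + 2 * Mdrift m t)) atTop (𝓝 C3) := by
    simpa using tendsto_const_nhds.add
      (tendsto_const_nhds.mul ((hM.pow 2).add (tendsto_const_nhds.mul hM)))
  refine limsup_le_div_of_le_mul_add_of_tendsto hC4 hC4' (.of_forall ha) (tendsto_kap m C4) hb ?_
  filter_upwards [eventually_ge_atTop 1] with t ht
  linarith [hrec t ht]

theorem limsup_convergence_bound
    (m C3 C4 : ℝ) (hm : 0 < m) (hC3 : 0 ≤ C3) (hC4 : 0 ≤ C4) (hC4' : C4 < 1)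
    (a : ℕ → ℝ) (ha : ∀ t, 0 ≤ a t)
    (hrec : ∀ t, 1 ≤ t →
      a (t + 1) ≤ kap m C4 t * a t + C3 + C4 * ((Mdrift m t) ^ 2 + 2 * Mdrift m t)) :
    Filter.limsup a Filter.atTop ≤ C3 / (1 - C4) :=
  limsup_convergence_bound_general m C3 C4 hC4 hC4' a ha hrec
end

section
/- Under the stated smoothness, strong convexity, minimizer and heterogeneity-bound hypotheses, for every θ ∈ E and every real α with 0 < α ≤ 1/L, it holds that ‖θ − θ* − α·∑_{k∈Π} w_k ∇F_k(θ)‖² ≤ (1 − μα)·‖θ − θ*‖² + α·Ω. -/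
/-!
Averaging preserves quadratic upper and lower bounds, so the aggregated objective
`∑ w_k F_k` is `L`-smooth and `μ`-strongly convex with gradient `∑ w_k ∇F_k`, and it is
bounded below by `∑ w_k F_k*`. For such a function a gradient step of size `α ≤ 1/L`
contracts the squared distance to any point `z` by `1 - μα`, up to the error
`2α (f z - inf f)`: strong convexity controls the cross term, and smoothness gives
`α ‖∇f‖² ≤ 2 (f - inf f)`, which absorbs the quadratic term. At `z = θ*` the
heterogeneity bounds make this error at most `αΩ`.
-/

open Finset RealInnerProductSpace

section QuadraticBounds

variable {E : Type*} [NormedAddCommGroup E] [InnerProductSpace ℝ E]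

def QuadraticUpperBound (f : E → ℝ) (f' : E → E) (L : ℝ) : Prop :=
  ∀ x y, f x - f y ≤ ⟪f' y, x - y⟫ + L / 2 * ‖x - y‖ ^ 2

def QuadraticLowerBound (f : E → ℝ) (f' : E → E) (μ : ℝ) : Prop :=
  ∀ x y, ⟪f' y, x - y⟫ + μ / 2 * ‖x - y‖ ^ 2 ≤ f x - f y

section WeightedSum

variable {ι : Type*} {s : Finset ι} {w : ι → ℝ} {f : ι → E → ℝ} {f' : ι → E → E}

theorem QuadraticUpperBound.weightedSum {L : ℝ} (hw : ∀ k ∈ s, 0 ≤ w k)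
    (hw1 : ∑ k ∈ s, w k = 1) (h : ∀ k ∈ s, QuadraticUpperBound (f k) (f' k) L) :
    QuadraticUpperBound (fun x ↦ ∑ k ∈ s, w k * f k x) (fun x ↦ ∑ k ∈ s, w k • f' k x) L := by
  intro x y
  calc ∑ k ∈ s, w k * f k x - ∑ k ∈ s, w k * f k y
      = ∑ k ∈ s, w k * (f k x - f k y) := by simp only [mul_sub, sum_sub_distrib]
    _ ≤ ∑ k ∈ s, w k * (⟪f' k y, x - y⟫ + L / 2 * ‖x - y‖ ^ 2) :=
      sum_le_sum fun k hk ↦ mul_le_mul_of_nonneg_left (h k hk x y) (hw k hk)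
    _ = ⟪∑ k ∈ s, w k • f' k y, x - y⟫ + L / 2 * ‖x - y‖ ^ 2 := by
      simp only [sum_inner, real_inner_smul_left, mul_add, sum_add_distrib, ← sum_mul, hw1,
        one_mul]

theorem QuadraticLowerBound.weightedSum {μ : ℝ} (hw : ∀ k ∈ s, 0 ≤ w k)
    (hw1 : ∑ k ∈ s, w k = 1) (h : ∀ k ∈ s, QuadraticLowerBound (f k) (f' k) μ) :
    QuadraticLowerBound (fun x ↦ ∑ k ∈ s, w k * f k x) (fun x ↦ ∑ k ∈ s, w k • f' k x) μ := by
  intro x y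
  calc
    _ = ∑ k ∈ s, w k * (⟪f' k y, x - y⟫ + μ / 2 * ‖x - y‖ ^ 2) := by
      simp only [sum_inner, real_inner_smul_left, mul_add, sum_add_distrib, ← sum_mul, hw1,
        one_mul]
    _ ≤ ∑ k ∈ s, w k * (f k x - f k y) :=
      sum_le_sum fun k hk ↦ mul_le_mul_of_nonneg_left (h k hk x y) (hw k hk)
    _ = ∑ k ∈ s, w k * f k x - ∑ k ∈ s, w k * f k y := by simp only [mul_sub, sum_sub_distrib]

end WeightedSum

variable {f : E → ℝ} {f' : E → E} {L μ m α : ℝ}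

/-- The step `x ↦ x - α • f' x` decreases `f` by at least `α/2 ‖f' x‖²`, and `f` stays above `m`. -/
theorem QuadraticUpperBound.mul_norm_sq_le (hf : QuadraticUpperBound f f' L)
    (hm : ∀ x, m ≤ f x) (hα : 0 ≤ α) (hLα : L * α ≤ 1) (x : E) :
    α * ‖f' x‖ ^ 2 ≤ 2 * (f x - m) := by
  have hdescent := hf (x - α • f' x) x
  rw [sub_sub_cancel_left, inner_neg_right, real_inner_smul_right, real_inner_self_eq_norm_sq,
    norm_neg, norm_smul, mul_pow, Real.norm_eq_abs, sq_abs] at hdescent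
  nlinarith [hm (x - α • f' x), mul_nonneg (mul_nonneg hα (sq_nonneg ‖f' x‖)) (sub_nonneg.2 hLα)]

theorem norm_gradient_step_sub_sq_le (hup : QuadraticUpperBound f f' L)
    (hlow : QuadraticLowerBound f f' μ) (hm : ∀ x, m ≤ f x) (hα : 0 ≤ α) (hLα : L * α ≤ 1)
    (x z : E) :
    ‖x - z - α • f' x‖ ^ 2 ≤ (1 - μ * α) * ‖x - z‖ ^ 2 + 2 * α * (f z - m) := by
  have hinner : f x - f z + μ / 2 * ‖x - z‖ ^ 2 ≤ ⟪x - z, f' x⟫ := by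
    have h := hlow z x
    rw [← neg_sub x z, inner_neg_right, real_inner_comm, norm_neg] at h
    linarith
  have hgrad := hup.mul_norm_sq_le hm hα hLα x
  rw [norm_sub_sq_real, real_inner_smul_right, norm_smul, mul_pow, Real.norm_eq_abs, sq_abs]
  nlinarith [mul_le_mul_of_nonneg_left hinner hα, mul_le_mul_of_nonneg_left hgrad hα]

end QuadraticBounds

theorem one_step_descent_bound_general
    (d : ℕ)
    (ι : Type*) [Fintype ι]
    (w : ι → ℝ) (hw : ∀ k, 0 ≤ w k) (hw1 : ∑ k, w k = 1)
    (F : ι → EuclideanSpace ℝ (Fin d) → ℝ)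
    (gradF : ι → EuclideanSpace ℝ (Fin d) → EuclideanSpace ℝ (Fin d))
    (L μ : ℝ)
    (hsmooth : ∀ k, ∀ x y : EuclideanSpace ℝ (Fin d),
      F k x - F k y ≤ ⟪gradF k y, x - y⟫ + (L / 2) * ‖x - y‖ ^ 2)
    (hstrong : ∀ k, ∀ x y : EuclideanSpace ℝ (Fin d),
      F k x - F k y ≥ ⟪gradF k y, x - y⟫ + (μ / 2) * ‖x - y‖ ^ 2)
    (Fkstar : ι → ℝ)
    (hminle : ∀ k, ∀ x, Fkstar k ≤ F k x)
    (θstar : EuclideanSpace ℝ (Fin d)) (Fstar : ℝ)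
    (φ1 φ2 : ℝ)
    (hhet1 : |Fstar - ∑ k, w k * Fkstar k| ≤ φ1)
    (hhet2 : |Fstar - ∑ k, w k * F k θstar| ≤ φ2)
    (Ω : ℝ) (hΩ : Ω = 2 * (φ1 + φ2)) :
    ∀ (θ : EuclideanSpace ℝ (Fin d)) (α : ℝ), 0 < α → α ≤ 1 / L →
      ‖θ - θstar - α • ∑ k, w k • gradF k θ‖ ^ 2
        ≤ (1 - μ * α) * ‖θ - θstar‖ ^ 2 + α * Ω := by
  intro θ α hα hαL
  have hL : 0 < L := one_div_pos.mp (hα.trans_le hαL)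
  have hLα : L * α ≤ 1 := by rw [le_div_iff₀ hL] at hαL; linarith
  have hup := QuadraticUpperBound.weightedSum (fun k _ ↦ hw k) hw1 fun k _ ↦ hsmooth k
  have hlow := QuadraticLowerBound.weightedSum (fun k _ ↦ hw k) hw1 fun k _ ↦ hstrong k
  have hinf : ∀ x, ∑ k, w k * Fkstar k ≤ ∑ k, w k * F k x := fun x ↦
    sum_le_sum fun k _ ↦ mul_le_mul_of_nonneg_left (hminle k x) (hw k)
  have hgap : ∑ k, w k * F k θstar - ∑ k, w k * Fkstar k ≤ Ω / 2 := by
    linarith [abs_le.mp hhet1, abs_le.mp hhet2]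
  have hstep := norm_gradient_step_sub_sq_le hup hlow hinf hα.le hLα θ θstar
  nlinarith [mul_le_mul_of_nonneg_left hgap hα.le]

theorem one_step_descent_bound
    (d : ℕ) (hd : 0 < d)
    (ι : Type*) [Fintype ι]
    (w : ι → ℝ) (hw : ∀ k, 0 ≤ w k) (hw1 : ∑ k, w k = 1)
    (F : ι → EuclideanSpace ℝ (Fin d) → ℝ)
    (gradF : ι → EuclideanSpace ℝ (Fin d) → EuclideanSpace ℝ (Fin d))
    (hdiff : ∀ k x, HasGradientAt (F k) (gradF k x) x)
    (L μ : ℝ) (hμ : 0 < μ) (hLμ : μ ≤ L)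
    (hsmooth : ∀ k, ∀ x y : EuclideanSpace ℝ (Fin d),
      F k x - F k y ≤ ⟪gradF k y, x - y⟫ + (L / 2) * ‖x - y‖ ^ 2)
    (hstrong : ∀ k, ∀ x y : EuclideanSpace ℝ (Fin d),
      F k x - F k y ≥ ⟪gradF k y, x - y⟫ + (μ / 2) * ‖x - y‖ ^ 2)
    (θmin : ι → EuclideanSpace ℝ (Fin d)) (Fkstar : ι → ℝ)
    (hmin : ∀ k, F k (θmin k) = Fkstar k)
    (hminle : ∀ k, ∀ x, Fkstar k ≤ F k x)
    (θstar : EuclideanSpace ℝ (Fin d)) (Fstar : ℝ)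
    (φ1 φ2 : ℝ) (hφ1 : 0 ≤ φ1) (hφ2 : 0 ≤ φ2)
    (hhet1 : |Fstar - ∑ k, w k * Fkstar k| ≤ φ1)
    (hhet2 : |Fstar - ∑ k, w k * F k θstar| ≤ φ2)
    (Ω : ℝ) (hΩ : Ω = 2 * (φ1 + φ2)) :
    ∀ (θ : EuclideanSpace ℝ (Fin d)) (α : ℝ), 0 < α → α ≤ 1 / L →
      ‖θ - θstar - α • ∑ k, w k • gradF k θ‖ ^ 2
        ≤ (1 - μ * α) * ‖θ - θstar‖ ^ 2 + α * Ω :=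
  one_step_descent_bound_general d ι w hw hw1 F gradF L μ hsmooth hstrong Fkstar hminle θstar Fstar
    φ1 φ2 hhet1 hhet2 Ω hΩ
end

section
/- Under the stated smoothness, strong convexity, minimizer, heterogeneity-bound and stochastic-gradient hypotheses, ∫ ‖∑_{k∈Π} w_k (G_k(ω) − ∇F_k(θ))‖² dP(ω) ≤ C2 + 2·(C1 − 1)·L²·(‖θ − θ*‖² + Ω/μ). -/
/-!
Smoothness gives `‖∇F_k(θ)‖² ≤ 2L (F_k(θ) - F_k*) ≤ L² ‖θ - θ_k*‖²`, and strong convexity gives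
`‖θ* - θ_k*‖² ≤ (2/μ) (F_k(θ*) - F_k*)`, whose `w`-average is at most `φ1 + φ2`; hence the
`w`-average of `‖∇F_k(θ)‖²` is at most `2L² (‖θ - θ*‖² + Ω/μ)`. On the stochastic side, Jensen's
inequality moves the squared norm inside the convex combination, and the variance of each `G_k`
is its second moment minus `‖∇F_k(θ)‖²`, which is at most `C2 + (C1 - 1) ‖∇F_k(θ)‖²`.
-/

open Finset RealInnerProductSpace MeasureTheory

lemma sum_mul_le_add_mul_sum_mul {ι : Type*} (s : Finset ι) {w a b : ι → ℝ} {A B : ℝ}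
    (hw : ∀ k ∈ s, 0 ≤ w k) (hw1 : ∑ k ∈ s, w k = 1) (hab : ∀ k ∈ s, a k ≤ A + B * b k) :
    ∑ k ∈ s, w k * a k ≤ A + B * ∑ k ∈ s, w k * b k :=
  calc ∑ k ∈ s, w k * a k ≤ ∑ k ∈ s, w k * (A + B * b k) :=
        sum_le_sum fun k hk => mul_le_mul_of_nonneg_left (hab k hk) (hw k hk)
    _ = A + B * ∑ k ∈ s, w k * b k := by
        simp only [mul_add, sum_add_distrib, ← sum_mul, hw1, one_mul, mul_sum, mul_left_comm]

lemma sq_norm_sum_smul_le {E ι : Type*} [SeminormedAddCommGroup E] [NormedSpace ℝ E]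
    (s : Finset ι) {w : ι → ℝ} (hw : ∀ k ∈ s, 0 ≤ w k) (hw1 : ∑ k ∈ s, w k = 1) (v : ι → E) :
    ‖∑ k ∈ s, w k • v k‖ ^ 2 ≤ ∑ k ∈ s, w k * ‖v k‖ ^ 2 :=
  ((convexOn_norm convex_univ).pow (fun _ _ => norm_nonneg _) 2).map_sum_le hw hw1
    fun _ _ => Set.mem_univ _

section Variance

variable {Ω E : Type*} [MeasurableSpace Ω] {P : Measure Ω} [IsProbabilityMeasure P]
  [NormedAddCommGroup E] [InnerProductSpace ℝ E] [CompleteSpace E]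

lemma integral_sq_norm_sub_integral {X : Ω → E} (hX : MemLp X 2 P) :
    ∫ ω, ‖X ω - ∫ ω', X ω' ∂P‖ ^ 2 ∂P = ∫ ω, ‖X ω‖ ^ 2 ∂P - ‖∫ ω, X ω ∂P‖ ^ 2 := by
  set m := ∫ ω, X ω ∂P
  have hX1 : Integrable X P := hX.integrable one_le_two
  have hX2 : Integrable (fun ω => ‖X ω‖ ^ 2) P := hX.norm.integrable_sq
  have hinner : Integrable (fun ω => 2 * ⟪m, X ω⟫) P := (hX1.const_inner m).const_mul 2
  calc ∫ ω, ‖X ω - m‖ ^ 2 ∂P = ∫ ω, (‖X ω‖ ^ 2 - 2 * ⟪m, X ω⟫ + ‖m‖ ^ 2) ∂P := by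
        congr 1 with ω
        rw [norm_sub_sq_real, real_inner_comm]
    _ = ∫ ω, ‖X ω‖ ^ 2 ∂P - 2 * ‖m‖ ^ 2 + ‖m‖ ^ 2 := by
        rw [integral_add (f := fun ω => ‖X ω‖ ^ 2 - 2 * ⟪m, X ω⟫) (hX2.sub hinner)
          (integrable_const _), integral_sub hX2 hinner,
          integral_const_mul, integral_inner hX1]
        simp [m]
    _ = ∫ ω, ‖X ω‖ ^ 2 ∂P - ‖m‖ ^ 2 := by ring

lemma integral_sq_norm_sum_smul_sub_integral_le {ι : Type*} (s : Finset ι) {w : ι → ℝ}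
    (hw : ∀ k ∈ s, 0 ≤ w k) (hw1 : ∑ k ∈ s, w k = 1) {X : ι → Ω → E}
    (hX : ∀ k ∈ s, MemLp (X k) 2 P) :
    ∫ ω, ‖∑ k ∈ s, w k • (X k ω - ∫ ω', X k ω' ∂P)‖ ^ 2 ∂P
      ≤ ∑ k ∈ s, w k * (∫ ω, ‖X k ω‖ ^ 2 ∂P - ‖∫ ω, X k ω ∂P‖ ^ 2) := by
  have hint : ∀ k ∈ s, Integrable (fun ω => w k * ‖X k ω - ∫ ω', X k ω' ∂P‖ ^ 2) P :=
    fun k hk => ((hX k hk).sub (memLp_const _)).norm.integrable_sq.const_mul (w k)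
  calc ∫ ω, ‖∑ k ∈ s, w k • (X k ω - ∫ ω', X k ω' ∂P)‖ ^ 2 ∂P
      ≤ ∫ ω, ∑ k ∈ s, w k * ‖X k ω - ∫ ω', X k ω' ∂P‖ ^ 2 ∂P :=
        integral_mono_of_nonneg (ae_of_all _ fun _ => by positivity) (integrable_finsetSum _ hint)
          (ae_of_all _ fun _ => sq_norm_sum_smul_le s hw hw1 _)
    _ = ∑ k ∈ s, w k * (∫ ω, ‖X k ω‖ ^ 2 ∂P - ‖∫ ω, X k ω ∂P‖ ^ 2) := by
        rw [integral_finsetSum _ hint]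
        refine sum_congr rfl fun k hk => ?_
        rw [integral_const_mul, integral_sq_norm_sub_integral (hX k hk)]

end Variance

section SmoothStronglyConvex

variable {E : Type*} [NormedAddCommGroup E] [InnerProductSpace ℝ E] {f : E → ℝ} {g : E → E}
  {L μ : ℝ}

lemma sq_norm_le_two_mul_sub_of_smooth (hL : 0 < L)
    (hsmooth : ∀ x y, f x - f y ≤ ⟪g y, x - y⟫ + (L / 2) * ‖x - y‖ ^ 2)
    {m : ℝ} (hm : ∀ x, m ≤ f x) (y : E) :
    ‖g y‖ ^ 2 ≤ 2 * L * (f y - m) := by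
  -- one gradient step of length `1 / L` decreases `f` by at least `‖g y‖ ^ 2 / (2 * L)`
  have hstep := hsmooth (y - L⁻¹ • g y) y
  rw [sub_sub_cancel_left, inner_neg_right, real_inner_smul_right, real_inner_self_eq_norm_sq,
    norm_neg, norm_smul, Real.norm_of_nonneg (inv_nonneg.2 hL.le)] at hstep
  have hdecrease : L⁻¹ * ‖g y‖ ^ 2 - L / 2 * (L⁻¹ * ‖g y‖) ^ 2 = ‖g y‖ ^ 2 / (2 * L) := by
    field_simp
    ring
  have := hm (y - L⁻¹ • g y)
  exact (div_le_iff₀' (by positivity)).1 (by linarith)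

lemma gradient_eq_zero_of_smooth_of_isMin (hL : 0 < L)
    (hsmooth : ∀ x y, f x - f y ≤ ⟪g y, x - y⟫ + (L / 2) * ‖x - y‖ ^ 2)
    {z : E} (hz : ∀ x, f z ≤ f x) : g z = 0 := by
  have := sq_norm_le_two_mul_sub_of_smooth hL hsmooth hz z
  rw [sub_self, mul_zero] at this
  exact norm_eq_zero.1 (pow_eq_zero_iff two_ne_zero |>.1 (le_antisymm this (sq_nonneg _)))

lemma sq_norm_le_sq_mul_sq_norm_sub_of_smooth_of_isMin (hL : 0 < L)
    (hsmooth : ∀ x y, f x - f y ≤ ⟪g y, x - y⟫ + (L / 2) * ‖x - y‖ ^ 2)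
    {z : E} (hz : ∀ x, f z ≤ f x) (y : E) :
    ‖g y‖ ^ 2 ≤ L ^ 2 * ‖y - z‖ ^ 2 := by
  have hgap := hsmooth y z
  rw [gradient_eq_zero_of_smooth_of_isMin hL hsmooth hz, inner_zero_left, zero_add] at hgap
  calc ‖g y‖ ^ 2 ≤ 2 * L * (f y - f z) := sq_norm_le_two_mul_sub_of_smooth hL hsmooth hz y
    _ ≤ 2 * L * (L / 2 * ‖y - z‖ ^ 2) := by gcongr
    _ = L ^ 2 * ‖y - z‖ ^ 2 := by ring

lemma sq_norm_sub_le_of_strongConvex (hμ : 0 < μ)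
    (hstrong : ∀ x y, f x - f y ≥ ⟪g y, x - y⟫ + (μ / 2) * ‖x - y‖ ^ 2)
    {z : E} (hgz : g z = 0) (y : E) :
    ‖y - z‖ ^ 2 ≤ 2 / μ * (f y - f z) := by
  have := hstrong y z
  rw [hgz, inner_zero_left, zero_add] at this
  rw [div_mul_eq_mul_div, le_div_iff₀ hμ]
  linarith

lemma sq_norm_le_of_smooth_of_strongConvex (hμ : 0 < μ) (hL : 0 < L)
    (hsmooth : ∀ x y, f x - f y ≤ ⟪g y, x - y⟫ + (L / 2) * ‖x - y‖ ^ 2)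
    (hstrong : ∀ x y, f x - f y ≥ ⟪g y, x - y⟫ + (μ / 2) * ‖x - y‖ ^ 2)
    {z : E} (hz : ∀ x, f z ≤ f x) (y x : E) :
    ‖g y‖ ^ 2 ≤ 2 * L ^ 2 * ‖y - x‖ ^ 2 + 4 * L ^ 2 / μ * (f x - f z) := by
  have hxz := sq_norm_sub_le_of_strongConvex hμ hstrong
    (gradient_eq_zero_of_smooth_of_isMin hL hsmooth hz) x
  have hparallelogram := parallelogram_law_with_norm ℝ (y - x) (x - z)
  rw [sub_add_sub_cancel] at hparallelogram
  calc ‖g y‖ ^ 2 ≤ L ^ 2 * ‖y - z‖ ^ 2 :=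
        sq_norm_le_sq_mul_sq_norm_sub_of_smooth_of_isMin hL hsmooth hz y
    _ ≤ L ^ 2 * (2 * ‖y - x‖ ^ 2 + 2 * (2 / μ * (f x - f z))) := by
        gcongr
        nlinarith [sq_nonneg ‖y - x - (x - z)‖]
    _ = 2 * L ^ 2 * ‖y - x‖ ^ 2 + 4 * L ^ 2 / μ * (f x - f z) := by ring

end SmoothStronglyConvex

theorem variance_of_aggregated_stochastic_gradient_general
    (d : ℕ)
    (ι : Type*) [Fintype ι]
    (w : ι → ℝ) (hw : ∀ k, 0 ≤ w k) (hw1 : ∑ k, w k = 1)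
    (F : ι → EuclideanSpace ℝ (Fin d) → ℝ)
    (gradF : ι → EuclideanSpace ℝ (Fin d) → EuclideanSpace ℝ (Fin d))
    (L μ : ℝ) (hμ : 0 < μ) (hLμ : μ ≤ L)
    (hsmooth : ∀ k, ∀ x y : EuclideanSpace ℝ (Fin d),
      F k x - F k y ≤ ⟪gradF k y, x - y⟫ + (L / 2) * ‖x - y‖ ^ 2)
    (hstrong : ∀ k, ∀ x y : EuclideanSpace ℝ (Fin d),
      F k x - F k y ≥ ⟪gradF k y, x - y⟫ + (μ / 2) * ‖x - y‖ ^ 2)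
    (θmin : ι → EuclideanSpace ℝ (Fin d)) (Fkstar : ι → ℝ)
    (hmin : ∀ k, F k (θmin k) = Fkstar k)
    (hminle : ∀ k, ∀ x, Fkstar k ≤ F k x)
    (θstar : EuclideanSpace ℝ (Fin d)) (Fstar : ℝ)
    (φ1 φ2 : ℝ)
    (hhet1 : |Fstar - ∑ k, w k * Fkstar k| ≤ φ1)
    (hhet2 : |Fstar - ∑ k, w k * F k θstar| ≤ φ2)
    (Ω : ℝ) (hΩ : Ω = 2 * (φ1 + φ2))
    (θ : EuclideanSpace ℝ (Fin d))
    (ΩP : Type*) [MeasurableSpace ΩP] (P : Measure ΩP) [IsProbabilityMeasure P]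
    (G : ι → ΩP → EuclideanSpace ℝ (Fin d))
    (hG2 : ∀ k, MemLp (G k) 2 P)
    (hunbiased : ∀ k, ∫ ω, G k ω ∂P = gradF k θ)
    (C1 C2 : ℝ) (hC1 : 1 ≤ C1)
    (hmoment : ∀ k, ∫ ω, ‖G k ω‖ ^ 2 ∂P ≤ C1 * ‖gradF k θ‖ ^ 2 + C2) :
    ∫ ω, ‖∑ k, w k • (G k ω - gradF k θ)‖ ^ 2 ∂P
      ≤ C2 + 2 * (C1 - 1) * L ^ 2 * (‖θ - θstar‖ ^ 2 + Ω / μ) := by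
  have hL : 0 < L := hμ.trans_le hLμ
  have hgrad : ∀ k, ‖gradF k θ‖ ^ 2
      ≤ 2 * L ^ 2 * ‖θ - θstar‖ ^ 2 + 4 * L ^ 2 / μ * (F k θstar - Fkstar k) := fun k => by
    have hθmin : ∀ x, F k (θmin k) ≤ F k x := fun x => (hmin k).symm ▸ hminle k x
    rw [← hmin k]
    exact sq_norm_le_of_smooth_of_strongConvex hμ hL (hsmooth k) (hstrong k) hθmin θ θstar
  have hhet : ∑ k, w k * (F k θstar - Fkstar k) ≤ φ1 + φ2 := by
    simp only [mul_sub, sum_sub_distrib]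
    linarith [abs_le.1 hhet1, abs_le.1 hhet2]
  have hvar : ∀ k, ∫ ω, ‖G k ω‖ ^ 2 ∂P - ‖gradF k θ‖ ^ 2 ≤ C2 + (C1 - 1) * ‖gradF k θ‖ ^ 2 :=
    fun k => by linarith [hmoment k]
  have hw' : ∀ k ∈ univ, 0 ≤ w k := fun k _ => hw k
  have hC1' : 0 ≤ C1 - 1 := sub_nonneg.2 hC1
  simp only [← hunbiased]
  calc ∫ ω, ‖∑ k, w k • (G k ω - ∫ ω', G k ω' ∂P)‖ ^ 2 ∂P
      ≤ ∑ k, w k * (∫ ω, ‖G k ω‖ ^ 2 ∂P - ‖∫ ω, G k ω ∂P‖ ^ 2) :=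
        integral_sq_norm_sum_smul_sub_integral_le _ hw' hw1 fun k _ => hG2 k
    _ ≤ C2 + (C1 - 1) * ∑ k, w k * ‖gradF k θ‖ ^ 2 := by
        simp only [hunbiased]
        exact sum_mul_le_add_mul_sum_mul _ hw' hw1 fun k _ => hvar k
    _ ≤ C2 + (C1 - 1) * (2 * L ^ 2 * ‖θ - θstar‖ ^ 2
          + 4 * L ^ 2 / μ * ∑ k, w k * (F k θstar - Fkstar k)) := by
        gcongr
        exact sum_mul_le_add_mul_sum_mul _ hw' hw1 fun k _ => hgrad k
    _ ≤ C2 + (C1 - 1) * (2 * L ^ 2 * ‖θ - θstar‖ ^ 2 + 4 * L ^ 2 / μ * (φ1 + φ2)) := by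
        gcongr
    _ = C2 + 2 * (C1 - 1) * L ^ 2 * (‖θ - θstar‖ ^ 2 + Ω / μ) := by
        rw [hΩ]
        ring

theorem variance_of_aggregated_stochastic_gradient
    (d : ℕ) (hd : 0 < d)
    (ι : Type*) [Fintype ι]
    (w : ι → ℝ) (hw : ∀ k, 0 ≤ w k) (hw1 : ∑ k, w k = 1)
    (F : ι → EuclideanSpace ℝ (Fin d) → ℝ)
    (gradF : ι → EuclideanSpace ℝ (Fin d) → EuclideanSpace ℝ (Fin d))
    (hdiff : ∀ k x, HasGradientAt (F k) (gradF k x) x)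
    (L μ : ℝ) (hμ : 0 < μ) (hLμ : μ ≤ L)
    (hsmooth : ∀ k, ∀ x y : EuclideanSpace ℝ (Fin d),
      F k x - F k y ≤ ⟪gradF k y, x - y⟫ + (L / 2) * ‖x - y‖ ^ 2)
    (hstrong : ∀ k, ∀ x y : EuclideanSpace ℝ (Fin d),
      F k x - F k y ≥ ⟪gradF k y, x - y⟫ + (μ / 2) * ‖x - y‖ ^ 2)
    (θmin : ι → EuclideanSpace ℝ (Fin d)) (Fkstar : ι → ℝ)
    (hmin : ∀ k, F k (θmin k) = Fkstar k)
    (hminle : ∀ k, ∀ x, Fkstar k ≤ F k x)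
    (θstar : EuclideanSpace ℝ (Fin d)) (Fstar : ℝ)
    (φ1 φ2 : ℝ) (hφ1 : 0 ≤ φ1) (hφ2 : 0 ≤ φ2)
    (hhet1 : |Fstar - ∑ k, w k * Fkstar k| ≤ φ1)
    (hhet2 : |Fstar - ∑ k, w k * F k θstar| ≤ φ2)
    (Ω : ℝ) (hΩ : Ω = 2 * (φ1 + φ2))
    (θ : EuclideanSpace ℝ (Fin d))
    (ΩP : Type*) [MeasurableSpace ΩP] (P : Measure ΩP) [IsProbabilityMeasure P]
    (G : ι → ΩP → EuclideanSpace ℝ (Fin d))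
    (hG2 : ∀ k, MemLp (G k) 2 P)
    (hunbiased : ∀ k, ∫ ω, G k ω ∂P = gradF k θ)
    (C1 C2 : ℝ) (hC1 : 1 ≤ C1) (hC2 : 0 ≤ C2)
    (hmoment : ∀ k, ∫ ω, ‖G k ω‖ ^ 2 ∂P ≤ C1 * ‖gradF k θ‖ ^ 2 + C2) :
    ∫ ω, ‖∑ k, w k • (G k ω - gradF k θ)‖ ^ 2 ∂P
      ≤ C2 + 2 * (C1 - 1) * L ^ 2 * (‖θ - θstar‖ ^ 2 + Ω / μ) :=
  variance_of_aggregated_stochastic_gradient_general d ι w hw hw1 F gradF L μ hμ hLμ hsmooth hstrong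
    θmin Fkstar hmin hminle θstar Fstar φ1 φ2 hhet1 hhet2 Ω hΩ θ ΩP P G hG2 hunbiased C1 C2 hC1
    hmoment
end

section
/- Under the stated smoothness, strong convexity, minimizer, heterogeneity-bound and stochastic-gradient hypotheses, if 0 < α ≤ 1/L and θ⁺(ω) = θ − α·∑_{k∈Π} w_k G_k(ω), then ∫ ‖θ⁺(ω) − θ*‖² dP(ω) ≤ C4·‖θ − θ*‖² + C3, where C4 = 1 − μα + 2·(C1 − 1)·L²·α² and C3 = α·Ω + α²·(C2 + 2·(C1 − 1)·L²·Ω/μ). -/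
/-!
With `F̄ = ∑ w_k F_k` and `g = ∑ w_k G_k`, expanding the square gives
`E‖θ⁺ - θ*‖² = ‖θ - θ*‖² + 2α⟪∇F̄(θ), θ* - θ⟫ + α² E‖g‖²`. Strong convexity bounds the cross term
by `-(F̄(θ) - F̄(θ*)) - μ/2 ‖θ - θ*‖²`; Jensen and the moment bound give
`E‖g‖² ≤ C1 ∑ w_k ‖∇F_k(θ)‖² + C2`, and smoothness together with the minima `F_k*` gives
`‖∇F_k(θ)‖² ≤ 2L (F_k(θ) - F_k*)`. Since `Lα ≤ 1`, the part of the second moment with `C1 = 1` is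
absorbed by the cross term, at the price `α Ω` from `F̄(θ*) - ∑ w_k F_k* ≤ Ω / 2`. The remaining
`(C1 - 1)` part is controlled by `F̄(θ) - ∑ w_k F_k* ≤ Ω + L ‖θ - θ*‖²`, which comes from
smoothness at `θ*` and Young's inequality applied to `⟪∇F̄(θ*), θ - θ*⟫`.
-/

open Finset RealInnerProductSpace MeasureTheory

section Averaging

variable {ι E : Type*} [Fintype ι] [NormedAddCommGroup E] [InnerProductSpace ℝ E] {w : ι → ℝ}

theorem norm_sum_smul_sq_le (hw : ∀ k, 0 ≤ w k) (hw1 : ∑ k, w k = 1) (v : ι → E) :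
    ‖∑ k, w k • v k‖ ^ 2 ≤ ∑ k, w k * ‖v k‖ ^ 2 := by
  have hnorm : ‖∑ k, w k • v k‖ ≤ ∑ k, w k * ‖v k‖ :=
    (norm_sum_le _ _).trans_eq <| sum_congr rfl fun k _ => by
      rw [norm_smul, Real.norm_of_nonneg (hw k)]
  have hcs : (∑ k, w k * ‖v k‖) ^ 2 ≤ (∑ k, w k) * ∑ k, w k * ‖v k‖ ^ 2 :=
    sum_sq_le_sum_mul_sum_of_sq_le_mul _ (fun k _ => hw k)
      (fun k _ => mul_nonneg (hw k) (sq_nonneg _)) fun k _ => le_of_eq (by ring)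
  rw [hw1, one_mul] at hcs
  exact (pow_le_pow_left₀ (norm_nonneg _) hnorm 2).trans hcs

theorem sum_mul_inner_add (hw1 : ∑ k, w k = 1) (g : ι → E) (v : E) (c : ℝ) :
    ∑ k, w k * (⟪g k, v⟫ + c) = ⟪∑ k, w k • g k, v⟫ + c := by
  simp only [mul_add, sum_add_distrib, ← sum_mul, hw1, one_mul, sum_inner, real_inner_smul_left]

theorem sum_mul_sub_sum_mul_le (hw : ∀ k, 0 ≤ w k) (hw1 : ∑ k, w k = 1) {a b : ι → ℝ}
    {g : ι → E} {v : E} {c : ℝ} (h : ∀ k, a k - b k ≤ ⟪g k, v⟫ + c) :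
    ∑ k, w k * a k - ∑ k, w k * b k ≤ ⟪∑ k, w k • g k, v⟫ + c := by
  rw [← sum_mul_inner_add hw1, ← sum_sub_distrib]
  simp_rw [← mul_sub]
  exact sum_le_sum fun k _ => mul_le_mul_of_nonneg_left (h k) (hw k)

theorem le_sum_mul_sub_sum_mul (hw : ∀ k, 0 ≤ w k) (hw1 : ∑ k, w k = 1) {a b : ι → ℝ}
    {g : ι → E} {v : E} {c : ℝ} (h : ∀ k, ⟪g k, v⟫ + c ≤ a k - b k) :
    ⟪∑ k, w k • g k, v⟫ + c ≤ ∑ k, w k * a k - ∑ k, w k * b k := by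
  rw [← sum_mul_inner_add hw1, ← sum_sub_distrib]
  simp_rw [← mul_sub]
  exact sum_le_sum fun k _ => mul_le_mul_of_nonneg_left (h k) (hw k)

end Averaging

section Smoothness

variable {E : Type*} [NormedAddCommGroup E] [InnerProductSpace ℝ E]

theorem norm_sq_le_two_mul_sub_of_smooth {f : E → ℝ} {y g : E} {L m : ℝ} (hL : 0 < L)
    (hsmooth : ∀ x, f x - f y ≤ ⟪g, x - y⟫ + L / 2 * ‖x - y‖ ^ 2) (hm : ∀ x, m ≤ f x) :
    ‖g‖ ^ 2 ≤ 2 * L * (f y - m) := by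
  have hstep := hsmooth (y - L⁻¹ • g)
  rw [sub_sub_cancel_left, inner_neg_right, real_inner_smul_right, real_inner_self_eq_norm_sq,
    norm_neg, norm_smul, mul_pow, Real.norm_of_nonneg (inv_nonneg.2 hL.le)] at hstep
  have hhalf : L / 2 * (L⁻¹ ^ 2 * ‖g‖ ^ 2) = L⁻¹ * ‖g‖ ^ 2 / 2 := by field_simp
  have hdescent : L⁻¹ * ‖g‖ ^ 2 / 2 ≤ f y - m := by linarith [hm (y - L⁻¹ • g)]
  calc ‖g‖ ^ 2 = 2 * L * (L⁻¹ * ‖g‖ ^ 2 / 2) := by field_simp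
    _ ≤ 2 * L * (f y - m) := by gcongr

theorem real_inner_le_norm_sq_div_add {u v : E} {L : ℝ} (hL : 0 < L) :
    ⟪u, v⟫ ≤ ‖u‖ ^ 2 / (2 * L) + L / 2 * ‖v‖ ^ 2 := by
  have hamgm : ‖u‖ * ‖v‖ ≤ ‖u‖ ^ 2 / (2 * L) + L / 2 * ‖v‖ ^ 2 := by
    rw [div_add' _ _ _ (by positivity), le_div_iff₀ (by positivity)]
    nlinarith [sq_nonneg (‖u‖ - L * ‖v‖)]
  exact (real_inner_le_norm u v).trans hamgm

end Smoothness

section Family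

variable {ι E : Type*} [Fintype ι] [NormedAddCommGroup E] [InnerProductSpace ℝ E] {w : ι → ℝ}
  {F : ι → E → ℝ} {gradF : ι → E → E} {Fmin : ι → ℝ} {L : ℝ}

theorem sum_mul_norm_sq_le_of_smooth (hw : ∀ k, 0 ≤ w k) (hL : 0 < L)
    (hsmooth : ∀ k, ∀ x y, F k x - F k y ≤ ⟪gradF k y, x - y⟫ + (L / 2) * ‖x - y‖ ^ 2)
    (hmin : ∀ k, ∀ x, Fmin k ≤ F k x) (y : E) :
    ∑ k, w k * ‖gradF k y‖ ^ 2 ≤ 2 * L * (∑ k, w k * F k y - ∑ k, w k * Fmin k) := by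
  rw [← sum_sub_distrib, mul_sum]
  refine sum_le_sum fun k _ => ?_
  have hk := mul_le_mul_of_nonneg_left
    (norm_sq_le_two_mul_sub_of_smooth hL (fun x => hsmooth k x y) (hmin k)) (hw k)
  linarith

theorem sum_mul_sub_le_of_smooth (hw : ∀ k, 0 ≤ w k) (hw1 : ∑ k, w k = 1) (hL : 0 < L)
    (hsmooth : ∀ k, ∀ x y, F k x - F k y ≤ ⟪gradF k y, x - y⟫ + (L / 2) * ‖x - y‖ ^ 2)
    (hmin : ∀ k, ∀ x, Fmin k ≤ F k x) (x y : E) :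
    ∑ k, w k * F k x - ∑ k, w k * F k y
      ≤ ∑ k, w k * F k y - ∑ k, w k * Fmin k + L * ‖x - y‖ ^ 2 := by
  have hupper := sum_mul_sub_sum_mul_le hw hw1 fun k => hsmooth k x y
  have hyoung := real_inner_le_norm_sq_div_add (u := ∑ k, w k • gradF k y) (v := x - y) hL
  have hgrad := (norm_sum_smul_sq_le hw hw1 _).trans
    (sum_mul_norm_sq_le_of_smooth hw hL hsmooth hmin y)
  have hgrad' : ‖∑ k, w k • gradF k y‖ ^ 2 / (2 * L)
      ≤ ∑ k, w k * F k y - ∑ k, w k * Fmin k := by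
    rw [div_le_iff₀ (by positivity)]
    linarith
  linarith

end Family

section Expectation

variable {Ω E : Type*} [MeasurableSpace Ω] {P : Measure Ω}
  [NormedAddCommGroup E] [InnerProductSpace ℝ E]

theorem integral_norm_sub_smul_sub_sq [CompleteSpace E] [IsProbabilityMeasure P] {X : Ω → E}
    (hX : MemLp X 2 P) (x y : E) (α : ℝ) :
    ∫ ω, ‖x - α • X ω - y‖ ^ 2 ∂P
      = ‖x - y‖ ^ 2 + 2 * α * ⟪∫ ω, X ω ∂P, y - x⟫ + α ^ 2 * ∫ ω, ‖X ω‖ ^ 2 ∂P := by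
  have hpoint : ∀ ω, ‖x - α • X ω - y‖ ^ 2
      = ‖x - y‖ ^ 2 + 2 * α * ⟪y - x, X ω⟫ + α ^ 2 * ‖X ω‖ ^ 2 := fun ω => by
    rw [sub_right_comm, norm_sub_sq_real, real_inner_smul_right, norm_smul, mul_pow,
      Real.norm_eq_abs, sq_abs, ← neg_sub y x, inner_neg_left]
    ring
  have hinner : Integrable (fun ω => 2 * α * ⟪y - x, X ω⟫) P :=
    ((hX.integrable one_le_two).const_inner _).const_mul _
  have hsq : Integrable (fun ω => α ^ 2 * ‖X ω‖ ^ 2) P := hX.integrable_norm_pow'.const_mul _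
  simp_rw [hpoint]
  rw [integral_add (by exact (integrable_const _).add hinner) hsq,
    integral_add (integrable_const _) hinner, integral_const, integral_const_mul,
    integral_const_mul, integral_inner (hX.integrable one_le_two), real_inner_comm]
  simp

theorem integral_norm_sum_smul_sq_le [IsFiniteMeasure P] {ι : Type*} [Fintype ι] {w : ι → ℝ}
    (hw : ∀ k, 0 ≤ w k) (hw1 : ∑ k, w k = 1) {G : ι → Ω → E} (hG : ∀ k, MemLp (G k) 2 P) :
    ∫ ω, ‖∑ k, w k • G k ω‖ ^ 2 ∂P ≤ ∑ k, w k * ∫ ω, ‖G k ω‖ ^ 2 ∂P := by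
  have hsq : ∀ k, Integrable (fun ω => w k * ‖G k ω‖ ^ 2) P :=
    fun k => (hG k).integrable_norm_pow'.const_mul _
  have hsum : MemLp (fun ω => ∑ k, w k • G k ω) 2 P :=
    memLp_finsetSum _ fun k _ => (hG k).const_smul (w k)
  calc ∫ ω, ‖∑ k, w k • G k ω‖ ^ 2 ∂P ≤ ∫ ω, ∑ k, w k * ‖G k ω‖ ^ 2 ∂P :=
        integral_mono hsum.integrable_norm_pow' (integrable_finsetSum _ fun k _ => hsq k)
          fun ω => norm_sum_smul_sq_le hw hw1 _
    _ = ∑ k, w k * ∫ ω, ‖G k ω‖ ^ 2 ∂P := by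
        rw [integral_finsetSum _ fun k _ => hsq k]
        simp_rw [integral_const_mul]

end Expectation

theorem sgd_step_le_of_estimates {A E2 ip Fθ Fs Fm L μ Ω C1 C2 α : ℝ} (hμ : 0 < μ) (hLμ : μ ≤ L)
    (hC1 : 1 ≤ C1) (hα0 : 0 < α) (hα : α ≤ 1 / L)
    (hip : ip ≤ Fs - Fθ - μ / 2 * A) (hE2 : E2 ≤ C1 * (2 * L * (Fθ - Fm)) + C2)
    (hFmθ : Fm ≤ Fθ) (hFms : Fm ≤ Fs) (hhet : Fs - Fm ≤ Ω / 2)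
    (hgap : Fθ - Fs ≤ Fs - Fm + L * A) :
    A + 2 * α * ip + α ^ 2 * E2
      ≤ (1 - μ * α + 2 * (C1 - 1) * L ^ 2 * α ^ 2) * A
        + (α * Ω + α ^ 2 * (C2 + 2 * (C1 - 1) * L ^ 2 * Ω / μ)) := by
  have hL : 0 < L := hμ.trans_le hLμ
  have hLα : L * α ≤ 1 := by rwa [le_div_iff₀ hL, mul_comm] at hα
  have hΩμ : Ω ≤ L * (Ω / μ) := by
    rw [mul_div_assoc', le_div_iff₀ hμ]
    nlinarith
  have hC1' : 0 ≤ 2 * (C1 - 1) * L * α ^ 2 := by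
    have : 0 ≤ C1 - 1 := by linarith
    positivity
  have hM : Fθ - Fm ≤ L * (Ω / μ) + L * A := by linarith
  rw [mul_div_assoc]
  linarith [mul_le_mul_of_nonneg_left hhet (by positivity : 0 ≤ 2 * α),
    mul_le_mul_of_nonneg_left hLα (by positivity : 0 ≤ 2 * α * (Fθ - Fm)),
    mul_le_mul_of_nonneg_left hM hC1',
    mul_le_mul_of_nonneg_left hE2 (sq_nonneg α), mul_le_mul_of_nonneg_left hip hα0.le]

theorem per_iteration_contraction_general
    (d : ℕ)
    (ι : Type*) [Fintype ι]
    (w : ι → ℝ) (hw : ∀ k, 0 ≤ w k) (hw1 : ∑ k, w k = 1)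
    (F : ι → EuclideanSpace ℝ (Fin d) → ℝ)
    (gradF : ι → EuclideanSpace ℝ (Fin d) → EuclideanSpace ℝ (Fin d))
    (L μ : ℝ) (hμ : 0 < μ) (hLμ : μ ≤ L)
    (hsmooth : ∀ k, ∀ x y : EuclideanSpace ℝ (Fin d),
      F k x - F k y ≤ ⟪gradF k y, x - y⟫ + (L / 2) * ‖x - y‖ ^ 2)
    (hstrong : ∀ k, ∀ x y : EuclideanSpace ℝ (Fin d),
      F k x - F k y ≥ ⟪gradF k y, x - y⟫ + (μ / 2) * ‖x - y‖ ^ 2)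
    (Fkstar : ι → ℝ)
    (hminle : ∀ k, ∀ x, Fkstar k ≤ F k x)
    (θstar : EuclideanSpace ℝ (Fin d)) (Fstar : ℝ)
    (φ1 φ2 : ℝ)
    (hhet1 : |Fstar - ∑ k, w k * Fkstar k| ≤ φ1)
    (hhet2 : |Fstar - ∑ k, w k * F k θstar| ≤ φ2)
    (Ω : ℝ) (hΩ : Ω = 2 * (φ1 + φ2))
    (θ : EuclideanSpace ℝ (Fin d))
    (ΩP : Type*) [MeasurableSpace ΩP] (P : Measure ΩP) [IsProbabilityMeasure P]
    (G : ι → ΩP → EuclideanSpace ℝ (Fin d))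
    (hG2 : ∀ k, MemLp (G k) 2 P)
    (hunbiased : ∀ k, ∫ ω, G k ω ∂P = gradF k θ)
    (C1 C2 : ℝ) (hC1 : 1 ≤ C1)
    (hmoment : ∀ k, ∫ ω, ‖G k ω‖ ^ 2 ∂P ≤ C1 * ‖gradF k θ‖ ^ 2 + C2)
    (α : ℝ) (hα0 : 0 < α) (hα : α ≤ 1 / L)
    (θplus : ΩP → EuclideanSpace ℝ (Fin d))
    (hθplus : ∀ ω, θplus ω = θ - α • ∑ k, w k • G k ω) :
    ∫ ω, ‖θplus ω - θstar‖ ^ 2 ∂P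
      ≤ (1 - μ * α + 2 * (C1 - 1) * L ^ 2 * α ^ 2) * ‖θ - θstar‖ ^ 2
        + (α * Ω + α ^ 2 * (C2 + 2 * (C1 - 1) * L ^ 2 * Ω / μ)) := by
  have hL : 0 < L := hμ.trans_le hLμ
  have hmean : ∫ ω, ∑ k, w k • G k ω ∂P = ∑ k, w k • gradF k θ := by
    rw [integral_finsetSum (f := fun k ω => w k • G k ω) _
      fun k _ => ((hG2 k).integrable one_le_two).smul (w k)]
    simp_rw [integral_smul, hunbiased]
  have hsum : MemLp (fun ω => ∑ k, w k • G k ω) 2 P :=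
    memLp_finsetSum univ fun k _ => (hG2 k).const_smul (w k)
  have hexpand := integral_norm_sub_smul_sub_sq hsum θ θstar α
  simp_rw [hmean, ← hθplus] at hexpand
  have hsecond : ∫ ω, ‖∑ k, w k • G k ω‖ ^ 2 ∂P
      ≤ C1 * (2 * L * (∑ k, w k * F k θ - ∑ k, w k * Fkstar k)) + C2 :=
    calc ∫ ω, ‖∑ k, w k • G k ω‖ ^ 2 ∂P ≤ ∑ k, w k * ∫ ω, ‖G k ω‖ ^ 2 ∂P :=
          integral_norm_sum_smul_sq_le hw hw1 hG2
      _ ≤ ∑ k, w k * (C1 * ‖gradF k θ‖ ^ 2 + C2) :=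
          sum_le_sum fun k _ => mul_le_mul_of_nonneg_left (hmoment k) (hw k)
      _ = C1 * ∑ k, w k * ‖gradF k θ‖ ^ 2 + C2 := by
          simp only [mul_add, sum_add_distrib, ← sum_mul, hw1, one_mul, mul_sum, mul_left_comm]
      _ ≤ _ := by
          gcongr
          exact sum_mul_norm_sq_le_of_smooth hw hL hsmooth hminle θ
  have hdescent := le_sum_mul_sub_sum_mul hw hw1 fun k => hstrong k θstar θ
  rw [norm_sub_rev] at hdescent
  rw [hexpand]
  exact sgd_step_le_of_estimates hμ hLμ hC1 hα0 hα (by linarith) hsecond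
    (sum_le_sum fun k _ => mul_le_mul_of_nonneg_left (hminle k θ) (hw k))
    (sum_le_sum fun k _ => mul_le_mul_of_nonneg_left (hminle k θstar) (hw k))
    (by rw [hΩ]; linarith [abs_le.1 hhet1, abs_le.1 hhet2])
    (sum_mul_sub_le_of_smooth hw hw1 hL hsmooth hminle θ θstar)

theorem per_iteration_contraction
    (d : ℕ) (hd : 0 < d)
    (ι : Type*) [Fintype ι]
    (w : ι → ℝ) (hw : ∀ k, 0 ≤ w k) (hw1 : ∑ k, w k = 1)
    (F : ι → EuclideanSpace ℝ (Fin d) → ℝ)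
    (gradF : ι → EuclideanSpace ℝ (Fin d) → EuclideanSpace ℝ (Fin d))
    (hdiff : ∀ k x, HasGradientAt (F k) (gradF k x) x)
    (L μ : ℝ) (hμ : 0 < μ) (hLμ : μ ≤ L)
    (hsmooth : ∀ k, ∀ x y : EuclideanSpace ℝ (Fin d),
      F k x - F k y ≤ ⟪gradF k y, x - y⟫ + (L / 2) * ‖x - y‖ ^ 2)
    (hstrong : ∀ k, ∀ x y : EuclideanSpace ℝ (Fin d),
      F k x - F k y ≥ ⟪gradF k y, x - y⟫ + (μ / 2) * ‖x - y‖ ^ 2)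
    (θmin : ι → EuclideanSpace ℝ (Fin d)) (Fkstar : ι → ℝ)
    (hmin : ∀ k, F k (θmin k) = Fkstar k)
    (hminle : ∀ k, ∀ x, Fkstar k ≤ F k x)
    (θstar : EuclideanSpace ℝ (Fin d)) (Fstar : ℝ)
    (φ1 φ2 : ℝ) (hφ1 : 0 ≤ φ1) (hφ2 : 0 ≤ φ2)
    (hhet1 : |Fstar - ∑ k, w k * Fkstar k| ≤ φ1)
    (hhet2 : |Fstar - ∑ k, w k * F k θstar| ≤ φ2)
    (Ω : ℝ) (hΩ : Ω = 2 * (φ1 + φ2))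
    (θ : EuclideanSpace ℝ (Fin d))
    (ΩP : Type*) [MeasurableSpace ΩP] (P : Measure ΩP) [IsProbabilityMeasure P]
    (G : ι → ΩP → EuclideanSpace ℝ (Fin d))
    (hG2 : ∀ k, MemLp (G k) 2 P)
    (hunbiased : ∀ k, ∫ ω, G k ω ∂P = gradF k θ)
    (C1 C2 : ℝ) (hC1 : 1 ≤ C1) (hC2 : 0 ≤ C2)
    (hmoment : ∀ k, ∫ ω, ‖G k ω‖ ^ 2 ∂P ≤ C1 * ‖gradF k θ‖ ^ 2 + C2)
    (α : ℝ) (hα0 : 0 < α) (hα : α ≤ 1 / L)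
    (θplus : ΩP → EuclideanSpace ℝ (Fin d))
    (hθplus : ∀ ω, θplus ω = θ - α • ∑ k, w k • G k ω) :
    ∫ ω, ‖θplus ω - θstar‖ ^ 2 ∂P
      ≤ (1 - μ * α + 2 * (C1 - 1) * L ^ 2 * α ^ 2) * ‖θ - θstar‖ ^ 2
        + (α * Ω + α ^ 2 * (C2 + 2 * (C1 - 1) * L ^ 2 * Ω / μ)) :=
  per_iteration_contraction_general d ι w hw hw1 F gradF L μ hμ hLμ hsmooth hstrong Fkstar hminle
    θstar Fstar φ1 φ2 hhet1 hhet2 Ω hΩ θ ΩP P G hG2 hunbiased C1 C2 hC1 hmoment α hα0 hα θplus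
    hθplus
end

section
/- Let d be a positive natural number and work in E = ℝ^d. Let K be a finite index set with weights w_k ≥ 0 summing to 1. For each k ∈ K, let F_k : E → ℝ be twice continuously differentiable and μ-strongly convex with L-Lipschitz gradient (L ≥ μ > 0), i.e., ‖∇F_k(x) − ∇F_k(y)‖ ≤ L·‖x − y‖ and F_k(x) − F_k(y) ≥ ⟨∇F_k(y), x − y⟩ + (μ/2)·‖x − y‖² for all x, y. Assume each F_k attains its minimum at a point θ_k* with ‖θ_k*‖ ≤ Λ_k for some Λ_k > 0. If θ* ∈ E satisfies ∑_{k∈K} w_k ∇F_k(θ*) = 0 (i.e., θ* is the minimizer of the weighted sum ∑_{k∈K} w_k F_k), then ‖θ*‖ ≤ (max_{k∈K} Λ_k)·L/μ. -/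
/-!
Each gradient `∇F_k` is `μ`-strongly monotone, and hence so is the convex combination
`G = ∑ w_k ∇F_k`. Strong monotonicity gives `μ ‖x - y‖ ≤ ‖G x - G y‖`; at the zero `θ*` of
`G` this reads `μ ‖θ*‖ ≤ ‖G 0‖ ≤ ∑ w_k ‖∇F_k 0 - ∇F_k θ_k*‖ ≤ L · max_k Λ_k`, using
`∇F_k θ_k* = 0` and the Lipschitz bound.
-/

open Finset RealInnerProductSpace

section StronglyMonotone

variable {E : Type*} [NormedAddCommGroup E] [InnerProductSpace ℝ E]

def IsStronglyMonotone (μ : ℝ) (g : E → E) : Prop :=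
  ∀ x y, μ * ‖x - y‖ ^ 2 ≤ ⟪g x - g y, x - y⟫

theorem IsStronglyMonotone.of_strongConvex {μ : ℝ} {f : E → ℝ} {g : E → E}
    (h : ∀ x y, f x - f y ≥ ⟪g y, x - y⟫ + (μ / 2) * ‖x - y‖ ^ 2) :
    IsStronglyMonotone μ g := by
  intro x y
  have hxy := h x y
  have hyx := h y x
  rw [← neg_sub x y, inner_neg_right, norm_neg] at hyx
  rw [inner_sub_left]
  linarith

theorem IsStronglyMonotone.sum_smul {ι : Type*} {s : Finset ι} {μ : ℝ} {w : ι → ℝ}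
    {g : ι → E → E} (hw : ∀ k ∈ s, 0 ≤ w k) (hw1 : ∑ k ∈ s, w k = 1)
    (hg : ∀ k ∈ s, IsStronglyMonotone μ (g k)) :
    IsStronglyMonotone μ (fun x ↦ ∑ k ∈ s, w k • g k x) := by
  intro x y
  calc μ * ‖x - y‖ ^ 2 = ∑ k ∈ s, w k * (μ * ‖x - y‖ ^ 2) := by
        rw [← sum_mul, hw1, one_mul]
    _ ≤ ∑ k ∈ s, w k * ⟪g k x - g k y, x - y⟫ :=
      sum_le_sum fun k hk ↦ mul_le_mul_of_nonneg_left (hg k hk x y) (hw k hk)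
    _ = ⟪∑ k ∈ s, w k • g k x - ∑ k ∈ s, w k • g k y, x - y⟫ := by
      simp only [← sum_sub_distrib, ← smul_sub, sum_inner, real_inner_smul_left]

theorem IsStronglyMonotone.mul_norm_sub_le {μ : ℝ} {g : E → E} (hg : IsStronglyMonotone μ g)
    (x y : E) : μ * ‖x - y‖ ≤ ‖g x - g y‖ := by
  rcases (norm_nonneg (x - y)).eq_or_lt with h | h
  · rw [← h, mul_zero]
    exact norm_nonneg _
  · refine le_of_mul_le_mul_right ?_ h
    calc μ * ‖x - y‖ * ‖x - y‖ = μ * ‖x - y‖ ^ 2 := by ring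
      _ ≤ ⟪g x - g y, x - y⟫ := hg x y
      _ ≤ ‖g x - g y‖ * ‖x - y‖ := real_inner_le_norm _ _

end StronglyMonotone

theorem IsLocalMin.hasGradientAt_eq_zero {E : Type*} [NormedAddCommGroup E]
    [InnerProductSpace ℝ E] [CompleteSpace E] {f : E → ℝ} {g : E} {x : E}
    (hmin : IsLocalMin f x) (hf : HasGradientAt f g x) : g = 0 :=
  (InnerProductSpace.toDual ℝ E).map_eq_zero_iff.mp (hmin.hasFDerivAt_eq_zero hf.hasFDerivAt)

theorem global_optimizer_bound_general
    (d : ℕ)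
    (ι : Type*) [Fintype ι] [Nonempty ι]
    (w : ι → ℝ) (hw : ∀ k, 0 ≤ w k) (hw1 : ∑ k, w k = 1)
    (F : ι → EuclideanSpace ℝ (Fin d) → ℝ)
    (gradF : ι → EuclideanSpace ℝ (Fin d) → EuclideanSpace ℝ (Fin d))
    (hdiff : ∀ k x, HasGradientAt (F k) (gradF k x) x)
    (L μ : ℝ) (hμ : 0 < μ) (hLμ : μ ≤ L)
    (hlip : ∀ k, ∀ x y : EuclideanSpace ℝ (Fin d),
      ‖gradF k x - gradF k y‖ ≤ L * ‖x - y‖)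
    (hstrong : ∀ k, ∀ x y : EuclideanSpace ℝ (Fin d),
      F k x - F k y ≥ ⟪gradF k y, x - y⟫ + (μ / 2) * ‖x - y‖ ^ 2)
    (θmin : ι → EuclideanSpace ℝ (Fin d))
    (hminle : ∀ k, ∀ x, F k (θmin k) ≤ F k x)
    (Λ : ι → ℝ) (hΛ : ∀ k, ‖θmin k‖ ≤ Λ k)
    (θstar : EuclideanSpace ℝ (Fin d))
    (hcrit : ∑ k, w k • gradF k θstar = 0) :
    ‖θstar‖ ≤ (Finset.univ.sup' Finset.univ_nonempty Λ) * L / μ := by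
  set Λmax := univ.sup' univ_nonempty Λ
  have hgrad_min (k : ι) : gradF k (θmin k) = 0 :=
    IsLocalMin.hasGradientAt_eq_zero (.of_forall (hminle k)) (hdiff k (θmin k))
  have hgrad_zero (k : ι) : ‖gradF k 0‖ ≤ L * Λmax := by
    calc ‖gradF k 0‖ = ‖gradF k 0 - gradF k (θmin k)‖ := by rw [hgrad_min, sub_zero]
      _ ≤ L * ‖θmin k‖ := by simpa using hlip k 0 (θmin k)
      _ ≤ L * Λmax := mul_le_mul_of_nonneg_left ((hΛ k).trans (le_sup' Λ (mem_univ k)))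
          (hμ.le.trans hLμ)
  have hG : IsStronglyMonotone μ (fun x ↦ ∑ k, w k • gradF k x) :=
    .sum_smul (fun k _ ↦ hw k) hw1 fun k _ ↦ .of_strongConvex (hstrong k)
  rw [le_div_iff₀ hμ]
  calc ‖θstar‖ * μ = μ * ‖θstar - 0‖ := by rw [sub_zero, mul_comm]
    _ ≤ ‖∑ k, w k • gradF k θstar - ∑ k, w k • gradF k 0‖ :=
      hG.mul_norm_sub_le θstar 0
    _ ≤ ∑ k, w k * ‖gradF k 0‖ := by
      rw [hcrit, zero_sub, norm_neg]
      refine (norm_sum_le _ _).trans_eq (sum_congr rfl fun k _ ↦ ?_)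
      rw [norm_smul, Real.norm_of_nonneg (hw k)]
    _ ≤ ∑ k, w k * (L * Λmax) :=
      sum_le_sum fun k _ ↦ mul_le_mul_of_nonneg_left (hgrad_zero k) (hw k)
    _ = Λmax * L := by rw [← sum_mul, hw1, one_mul, mul_comm]

theorem global_optimizer_bound
    (d : ℕ) (hd : 0 < d)
    (ι : Type*) [Fintype ι] [Nonempty ι]
    (w : ι → ℝ) (hw : ∀ k, 0 ≤ w k) (hw1 : ∑ k, w k = 1)
    (F : ι → EuclideanSpace ℝ (Fin d) → ℝ)
    (gradF : ι → EuclideanSpace ℝ (Fin d) → EuclideanSpace ℝ (Fin d))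
    (hC2 : ∀ k, ContDiff ℝ 2 (F k))
    (hdiff : ∀ k x, HasGradientAt (F k) (gradF k x) x)
    (L μ : ℝ) (hμ : 0 < μ) (hLμ : μ ≤ L)
    (hlip : ∀ k, ∀ x y : EuclideanSpace ℝ (Fin d),
      ‖gradF k x - gradF k y‖ ≤ L * ‖x - y‖)
    (hstrong : ∀ k, ∀ x y : EuclideanSpace ℝ (Fin d),
      F k x - F k y ≥ ⟪gradF k y, x - y⟫ + (μ / 2) * ‖x - y‖ ^ 2)
    (θmin : ι → EuclideanSpace ℝ (Fin d))
    (hminle : ∀ k, ∀ x, F k (θmin k) ≤ F k x)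
    (Λ : ι → ℝ) (hΛpos : ∀ k, 0 < Λ k) (hΛ : ∀ k, ‖θmin k‖ ≤ Λ k)
    (θstar : EuclideanSpace ℝ (Fin d))
    (hcrit : ∑ k, w k • gradF k θstar = 0) :
    ‖θstar‖ ≤ (Finset.univ.sup' Finset.univ_nonempty Λ) * L / μ :=
  global_optimizer_bound_general d ι w hw hw1 F gradF hdiff L μ hμ hLμ hlip hstrong θmin hminle Λ hΛ
    θstar hcrit
end

section
/- Let z > 0 be a real number. The function f : (0, ∞) → ℝ defined by f(P) = P / log₂(1 + z·P) is concave on (0, ∞), where log₂ denotes the base-2 logarithm. -/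
/-- Key inequality: `2x/(2+x) ≤ log(1+x)` for `x ≥ 0`. -/
lemma key_log_ineq (x : ℝ) (hx : 0 ≤ x) : 2 * x / (2 + x) ≤ Real.log (1 + x) := by
  set φ : ℝ → ℝ := fun t => Real.log (1 + t) - 2 * t / (2 + t) with hφ
  have hder : ∀ t : ℝ, 0 < t →
      HasDerivAt φ (1 / (1 + t) - (2 * (2 + t) - 2 * t * 1) / (2 + t) ^ 2) t := by
    intro t ht
    have h1 : HasDerivAt (fun s : ℝ => 1 + s) 1 t := (hasDerivAt_id t).const_add 1
    have hne : (1 : ℝ) + t ≠ 0 := by linarith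
    have hlog : HasDerivAt (fun s : ℝ => Real.log (1 + s)) (1 / (1 + t)) t := h1.log hne
    have hnum : HasDerivAt (fun s : ℝ => 2 * s) 2 t := by
      simpa using (hasDerivAt_id t).const_mul 2
    have hden : HasDerivAt (fun s : ℝ => 2 + s) 1 t := (hasDerivAt_id t).const_add 2
    have hdne : (2 : ℝ) + t ≠ 0 := by linarith
    exact hlog.sub (hnum.div hden hdne)
  have hmono : MonotoneOn φ (Set.Ici (0 : ℝ)) := by
    apply monotoneOn_of_deriv_nonneg (convex_Ici 0)
    · apply ContinuousOn.sub
      · apply ContinuousOn.log (by fun_prop)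
        intro s hs
        simp only [Set.mem_Ici] at hs
        intro h; linarith
      · apply ContinuousOn.div (by fun_prop) (by fun_prop)
        intro s hs
        simp only [Set.mem_Ici] at hs
        intro h; linarith
    · rw [interior_Ici]
      intro t ht
      exact ((hder t ht).differentiableAt).differentiableWithinAt
    · rw [interior_Ici]
      intro t ht
      have ht' : 0 < t := ht
      rw [(hder t ht').deriv]
      rw [sub_nonneg, div_le_div_iff₀ (by positivity) (by positivity)]
      nlinarith
  rcases eq_or_lt_of_le hx with h | h
  · simp [← h]
  · have h0 : φ 0 ≤ φ x := hmono (by simp) (Set.mem_Ici.mpr hx) hx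
    have : φ 0 = 0 := by simp [hφ]
    rw [this] at h0
    simpa [hφ, sub_nonneg] using h0

theorem power_over_rate_concave (z : ℝ) (hz : 0 < z) :
    ConcaveOn ℝ (Set.Ioi (0 : ℝ)) (fun P : ℝ => P / Real.logb 2 (1 + z * P)) := by
  have hfun : (fun P : ℝ => P / Real.logb 2 (1 + z * P))
      = fun P : ℝ => P * Real.log 2 / Real.log (1 + z * P) := by
    funext P
    rw [Real.logb, div_div_eq_mul_div]
  rw [hfun]
  set c := Real.log 2 with hc
  have hcpos : 0 < c := Real.log_pos (by norm_num)
  -- basic facts on Ioi 0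
  have hu : ∀ P : ℝ, 0 < P → 1 < 1 + z * P := by
    intro P hP; nlinarith
  have hL : ∀ P : ℝ, 0 < P → 0 < Real.log (1 + z * P) := by
    intro P hP; exact Real.log_pos (hu P hP)
  -- first and second derivatives
  set f' : ℝ → ℝ := fun P =>
    (c * Real.log (1 + z * P) - P * c * (z / (1 + z * P))) / Real.log (1 + z * P) ^ 2 with hf'
  set f'' : ℝ → ℝ := fun P =>
    c * z * (2 * (z * P) - (2 + z * P) * Real.log (1 + z * P)) /
      ((1 + z * P) ^ 2 * Real.log (1 + z * P) ^ 3) with hf''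
  apply concaveOn_of_hasDerivWithinAt2_nonpos (f' := f') (f'' := f'') (convex_Ioi 0)
  · -- continuity
    apply ContinuousOn.div (by fun_prop)
    · apply Real.continuousOn_log.comp (by fun_prop)
      intro P hP
      simp only [Set.mem_Ioi] at hP
      simp only [Set.mem_compl_iff, Set.mem_singleton_iff]
      have := hu P hP; intro h; rw [h] at this; linarith
    · intro P hP
      exact ne_of_gt (hL P (Set.mem_Ioi.mp hP))
  · -- first derivative
    rw [interior_Ioi]
    intro P hP
    have hP' : 0 < P := Set.mem_Ioi.mp hP
    have hupos : (0:ℝ) < 1 + z * P := lt_trans one_pos (hu P hP')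
    have h1 : HasDerivAt (fun Q : ℝ => 1 + z * Q) z P := by
      simpa using ((hasDerivAt_id P).const_mul z).const_add 1
    have hlog : HasDerivAt (fun Q : ℝ => Real.log (1 + z * Q)) (z / (1 + z * P)) P :=
      h1.log (ne_of_gt hupos)
    have hnum : HasDerivAt (fun Q : ℝ => Q * c) c P := by
      simpa using (hasDerivAt_id P).mul_const c
    have := hnum.div hlog (ne_of_gt (hL P hP'))
    have heq : (c * Real.log (1 + z * P) - P * c * (z / (1 + z * P))) /
        Real.log (1 + z * P) ^ 2 = f' P := rfl
    rw [← heq]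
    exact this.hasDerivWithinAt
  · -- second derivative
    rw [interior_Ioi]
    intro P hP
    have hP' : 0 < P := Set.mem_Ioi.mp hP
    have hupos : (0:ℝ) < 1 + z * P := lt_trans one_pos (hu P hP')
    have hLP : 0 < Real.log (1 + z * P) := hL P hP'
    have h1 : HasDerivAt (fun Q : ℝ => 1 + z * Q) z P := by
      simpa using ((hasDerivAt_id P).const_mul z).const_add 1
    have hlog : HasDerivAt (fun Q : ℝ => Real.log (1 + z * Q)) (z / (1 + z * P)) P :=
      h1.log (ne_of_gt hupos)
    -- numerator A of f'
    have hA : HasDerivAt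
        (fun Q : ℝ => c * Real.log (1 + z * Q) - Q * c * (z / (1 + z * Q)))
        (c * (z / (1 + z * P)) -
          ((c * z) * (1 + z * P) - P * c * z * z) / (1 + z * P) ^ 2) P := by
      have ht1 : HasDerivAt (fun Q : ℝ => c * Real.log (1 + z * Q)) (c * (z / (1 + z * P))) P :=
        hlog.const_mul c
      have ht2n : HasDerivAt (fun Q : ℝ => Q * c * z) (c * z) P := by
        simpa [mul_assoc] using (hasDerivAt_id P).mul_const (c * z)
      have ht2 := ht2n.div h1 (ne_of_gt hupos)
      have ht2' : HasDerivAt (fun Q : ℝ => Q * c * (z / (1 + z * Q)))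
          ((c * z * (1 + z * P) - P * c * z * z) / (1 + z * P) ^ 2) P := by
        simpa [mul_div_assoc, Pi.div_def] using ht2
      simpa [Pi.sub_def] using ht1.sub ht2'
    -- denominator B of f'
    have hB : HasDerivAt (fun Q : ℝ => Real.log (1 + z * Q) ^ 2)
        (2 * Real.log (1 + z * P) ^ 1 * (z / (1 + z * P))) P := by
      simpa [Pi.pow_def] using hlog.pow 2
    have hdiv := hA.div hB (by positivity)
    have hmatch : ((c * (z / (1 + z * P)) -
          ((c * z) * (1 + z * P) - P * c * z * z) / (1 + z * P) ^ 2) *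
          Real.log (1 + z * P) ^ 2 -
          (c * Real.log (1 + z * P) - P * c * (z / (1 + z * P))) *
          (2 * Real.log (1 + z * P) ^ 1 * (z / (1 + z * P)))) /
          (Real.log (1 + z * P) ^ 2) ^ 2 = f'' P := by
      rw [hf'']
      field_simp
      ring
    rw [← hmatch] at *
    exact hdiv.hasDerivWithinAt
  · -- nonpositivity
    rw [interior_Ioi]
    intro P hP
    have hP' : 0 < P := Set.mem_Ioi.mp hP
    have hupos : (0:ℝ) < 1 + z * P := lt_trans one_pos (hu P hP')
    have hLP : 0 < Real.log (1 + z * P) := hL P hP'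
    have hx : 0 ≤ z * P := le_of_lt (by positivity)
    have hkey := key_log_ineq (z * P) hx
    rw [div_le_iff₀ (by positivity)] at hkey
    apply div_nonpos_of_nonpos_of_nonneg
    · apply mul_nonpos_of_nonneg_of_nonpos (by positivity)
      linarith
    · positivity
end

section
/- Let A ≥ 0 and ι > 0 be real numbers. The function W : (0, ∞) → ℝ defined by W(ρ) = A / (ρ·log₂(1 + ι/ρ)) is convex on (0, ∞), where log₂ denotes the base-2 logarithm. -/
/-!
The rate `U ρ = ρ · log₂ (1 + ι / ρ)` is the perspective of the concave function
`s ↦ log₂ (1 + s)`, hence concave, and it is positive. The energy is `A / U ρ`, and a convex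
nonincreasing function of a concave function is convex.
-/

open Set Real

theorem ConvexOn.comp_concaveOn_of_mapsTo {E : Type*} [AddCommGroup E] [Module ℝ E]
    {s : Set E} {t : Set ℝ} {f : E → ℝ} {g : ℝ → ℝ} (hg : ConvexOn ℝ t g)
    (hf : ConcaveOn ℝ s f) (hg' : AntitoneOn g t) (hst : MapsTo f s t) :
    ConvexOn ℝ s (g ∘ f) :=
  ⟨hf.1, fun _ hx _ hy _ _ ha hb hab =>
    (hg' (hg.1 (hst hx) (hst hy) ha hb hab) (hst (hf.1 hx hy ha hb hab))
      (hf.2 hx hy ha hb hab)).trans (hg.2 (hst hx) (hst hy) ha hb hab)⟩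

theorem ConcaveOn.perspective {h : ℝ → ℝ} (hh : ConcaveOn ℝ (Ioi 0) h) {c : ℝ} (hc : 0 < c) :
    ConcaveOn ℝ (Ioi 0) fun t => t * h (c / t) := by
  refine ⟨convex_Ioi 0, fun x (hx : 0 < x) y (hy : 0 < y) a b ha hb hab => ?_⟩
  simp only [smul_eq_mul]
  have hz : 0 < a * x + b * y := convex_Ioi (0 : ℝ) hx hy ha hb hab
  -- with `z = a x + b y`, the weights `a x / z`, `b y / z` average `c / x`, `c / y` to `c / z`
  have hweights : a * x / (a * x + b * y) + b * y / (a * x + b * y) = 1 := by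
    field_simp
  have hmean : a * x / (a * x + b * y) * (c / x) + b * y / (a * x + b * y) * (c / y) =
      c / (a * x + b * y) := by
    field_simp
    linear_combination hab
  have hconc := hh.2 (div_pos hc hx) (div_pos hc hy) (by positivity) (by positivity) hweights
  simp only [smul_eq_mul, hmean] at hconc
  calc a * (x * h (c / x)) + b * (y * h (c / y))
      = (a * x + b * y) * (a * x / (a * x + b * y) * h (c / x) +
          b * y / (a * x + b * y) * h (c / y)) := by
        field_simp
    _ ≤ (a * x + b * y) * h (c / (a * x + b * y)) := mul_le_mul_of_nonneg_left hconc hz.le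

theorem concaveOn_logb_Ioi {b : ℝ} (hb : 1 ≤ b) : ConcaveOn ℝ (Ioi 0) (logb b) := by
  refine (strictConcaveOn_log_Ioi.concaveOn.smul (inv_nonneg.2 (log_nonneg hb))).congr
    fun x _ => ?_
  simp [logb, div_eq_inv_mul]

theorem concaveOn_logb_one_add {b : ℝ} (hb : 1 ≤ b) :
    ConcaveOn ℝ (Ioi (-1)) fun s => logb b (1 + s) := by
  have hdom : (fun z : ℝ => 1 + z) ⁻¹' Ioi 0 = Ioi (-1) := by
    ext s
    simp [neg_lt_iff_pos_add']
  exact hdom ▸ (concaveOn_logb_Ioi hb).translate_right 1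

theorem convexOn_const_div_Ioi {A : ℝ} (hA : 0 ≤ A) : ConvexOn ℝ (Ioi 0) fun u => A / u := by
  refine ((convexOn_zpow (-1)).smul hA).congr fun u _ => ?_
  simp [div_eq_mul_inv]

theorem antitoneOn_const_div_Ioi {A : ℝ} (hA : 0 ≤ A) : AntitoneOn (fun u => A / u) (Ioi 0) :=
  fun _ hu _ _ huv => div_le_div_of_nonneg_left hA hu huv

theorem transmission_energy_convex_in_bandwidth (A ι : ℝ) (hA : 0 ≤ A) (hι : 0 < ι) :
    ConvexOn ℝ (Set.Ioi (0 : ℝ)) (fun ρ : ℝ => A / (ρ * Real.logb 2 (1 + ι / ρ))) := by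
  have hlog : ConcaveOn ℝ (Ioi 0) fun s => logb 2 (1 + s) :=
    (concaveOn_logb_one_add one_le_two).subset (Ioi_subset_Ioi (by norm_num)) (convex_Ioi 0)
  have hrate : ConcaveOn ℝ (Ioi 0) fun ρ => ρ * logb 2 (1 + ι / ρ) := hlog.perspective hι
  have hrate_pos : MapsTo (fun ρ => ρ * logb 2 (1 + ι / ρ)) (Ioi 0) (Ioi 0) :=
    fun ρ (hρ : 0 < ρ) => mul_pos hρ (logb_pos one_lt_two (lt_add_of_pos_right 1 (div_pos hι hρ)))
  exact (convexOn_const_div_Ioi hA).comp_concaveOn_of_mapsTo hrate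
    (antitoneOn_const_div_Ioi hA) hrate_pos
end
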